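/- Let G be the group with presentation on two generators a, b and the two relators R₁ = a³b⁻¹a²b⁻²a⁻¹·b⁻²a⁻¹·b⁻²a²b⁻¹a³b and R₂ = a³b⁻¹a³b·ba⁻²ba⁻³·ba⁻²ba⁻³ba⁻²b² (the fundamental group of the hyperbolic football manifold (5,6,6)). Then the abelianization of G (its first homology group H₁) is a cyclic group of order 14, i.e. it is isomorphic to ℤ/14ℤ. -/

import Mathlib

/-!
Abelianizing the relators leaves their exponent sums: `R₁` gives `8a = 7b` and `R₂` gives
`6a = 7b` in `H₁(G)`, so `2a = 0` and `7b = 0`. Hence `g = a - 3b` satisfies `7g = a`, `2g = b`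
and `14g = 0`, so `H₁(G)` is cyclic of order dividing `14`; conversely `a ↦ 7`, `b ↦ 2` kills both
relators and sends `g` to `1 ∈ ℤ/14`.
-/

namespace FootballManifold

/-- The generator `a` of the free group on two generators. -/
def a : FreeGroup (Fin 2) := FreeGroup.of 0

/-- The generator `b` of the free group on two generators. -/
def b : FreeGroup (Fin 2) := FreeGroup.of 1

/-- The first relator of the football manifold group. -/
def R₁ : FreeGroup (Fin 2) :=
  a^3 * b⁻¹ * a^2 * (b⁻¹)^2 * a⁻¹ * (b⁻¹)^2 * a⁻¹ * (b⁻¹)^2 * a^2 * b⁻¹ * a^3 * b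

/-- The second relator of the football manifold group. -/
def R₂ : FreeGroup (Fin 2) :=
  a^3 * b⁻¹ * a^3 * b^2 * (a⁻¹)^2 * b * (a⁻¹)^3 * b * (a⁻¹)^2 * b * (a⁻¹)^3 * b * (a⁻¹)^2 * b^2

/-- The fundamental group `G` of the hyperbolic football manifold `(5,6,6)`. -/
def G : Type := PresentedGroup ({R₁, R₂} : Set (FreeGroup (Fin 2)))

instance : Group G := by unfold G; infer_instance

end FootballManifold

section ZModHom

variable {H : Type*} [Group H] {n : ℕ}

theorem MonoidHom.ext_multiplicative_zmod {f f' : Multiplicative (ZMod n) →* H}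
    (h : f (.ofAdd 1) = f' (.ofAdd 1)) : f = f' := by
  refine MonoidHom.ext fun x => ?_
  obtain ⟨k, hk⟩ := ZMod.intCast_surjective (Multiplicative.toAdd x)
  have hx : x = Multiplicative.ofAdd 1 ^ k := by
    rw [← ofAdd_zsmul, zsmul_one, hk, ofAdd_toAdd]
  rw [hx, map_zpow, map_zpow, h]

def zmodHomOfPowEqOne (g : H) (hg : g ^ n = 1) : Multiplicative (ZMod n) →* H :=
  AddMonoidHom.toMultiplicativeLeft <| ZMod.lift n
    ⟨zmultiplesHom _ (Additive.ofMul g), by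
      rw [zmultiplesHom_apply, natCast_zsmul, ← ofMul_pow, hg, ofMul_one]⟩

theorem zmodHomOfPowEqOne_ofAdd_one (g : H) (hg : g ^ n = 1) :
    zmodHomOfPowEqOne g hg (.ofAdd 1) = g := by
  rw [← Int.cast_one (R := ZMod n), zmodHomOfPowEqOne, AddMonoidHom.coe_toMultiplicativeLeft, Function.comp_apply,
    Function.comp_apply, toAdd_ofAdd, ZMod.lift_coe, zmultiplesHom_apply, one_zsmul, toMul_ofMul]

end ZModHom

namespace FootballManifold

def toH₁ : FreeGroup (Fin 2) →* Abelianization G :=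
  Abelianization.of.comp (PresentedGroup.mk ({R₁, R₂} : Set (FreeGroup (Fin 2))))

theorem toH₁_relator {r : FreeGroup (Fin 2)} (hr : r ∈ ({R₁, R₂} : Set (FreeGroup (Fin 2)))) :
    toH₁ r = 1 :=
  have hmk : (PresentedGroup.mk _ r : G) = 1 := PresentedGroup.one_of_mem hr
  (congrArg (Abelianization.of : G →* _) hmk).trans (map_one _)

theorem relator₁_abelianized : toH₁ a ^ 8 = toH₁ b ^ 7 := by
  rw [← mul_inv_eq_one, ← toH₁_relator (Set.mem_insert R₁ _)]
  simp only [R₁, map_mul, map_pow, map_inv]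
  apply Additive.ofMul.injective
  simp only [ofMul_mul, ofMul_pow, ofMul_inv]
  abel

theorem relator₂_abelianized : toH₁ a ^ 6 = toH₁ b ^ 7 := by
  rw [← inv_mul_eq_one, ← toH₁_relator (Set.mem_insert_of_mem R₁ rfl)]
  simp only [R₂, map_mul, map_pow, map_inv]
  apply Additive.ofMul.injective
  simp only [ofMul_mul, ofMul_pow, ofMul_inv]
  abel

theorem toH₁_a_sq : toH₁ a ^ 2 = 1 :=
  calc toH₁ a ^ 2 = toH₁ a ^ 8 * (toH₁ a ^ 6)⁻¹ := by group
    _ = 1 := by rw [relator₁_abelianized, relator₂_abelianized, mul_inv_cancel]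

theorem toH₁_b_pow_seven : toH₁ b ^ 7 = 1 := by
  rw [← relator₂_abelianized, pow_eq_pow_mod 6 toH₁_a_sq]
  rfl

def h₁Generator : Abelianization G := toH₁ a * toH₁ b ^ (-3 : ℤ)

theorem h₁Generator_sq : h₁Generator ^ 2 = toH₁ b := by
  simp only [h₁Generator, ← zpow_natCast, mul_zpow, ← zpow_mul]
  rw [zpow_eq_zpow_emod' _ toH₁_a_sq, zpow_eq_zpow_emod' _ toH₁_b_pow_seven]
  norm_num

theorem h₁Generator_pow_seven : h₁Generator ^ 7 = toH₁ a := by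
  simp only [h₁Generator, ← zpow_natCast, mul_zpow, ← zpow_mul]
  rw [zpow_eq_zpow_emod' _ toH₁_a_sq, zpow_eq_zpow_emod' _ toH₁_b_pow_seven]
  norm_num

theorem h₁Generator_pow_fourteen : h₁Generator ^ 14 = 1 := by
  rw [show 14 = 2 * 7 from rfl, pow_mul, h₁Generator_sq, toH₁_b_pow_seven]

def toZMod : Abelianization G →* Multiplicative (ZMod 14) :=
  Abelianization.lift <| PresentedGroup.toGroup (f := ![.ofAdd 7, .ofAdd 2]) <| by
    rintro r (rfl | rfl) <;>
      simp only [R₁, R₂, a, b, map_mul, map_pow, map_inv, FreeGroup.lift_apply_of] <;>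
      decide

theorem toZMod_toH₁ (x : FreeGroup (Fin 2)) :
    toZMod (toH₁ x) = FreeGroup.lift ![.ofAdd 7, .ofAdd 2] x :=
  rfl

theorem toZMod_h₁Generator : toZMod h₁Generator = .ofAdd 1 := by
  rw [h₁Generator, map_mul, map_zpow, toZMod_toH₁, toZMod_toH₁]
  decide

def ofZMod : Multiplicative (ZMod 14) →* Abelianization G :=
  zmodHomOfPowEqOne h₁Generator h₁Generator_pow_fourteen

theorem ofZMod_ofAdd_one : ofZMod (.ofAdd 1) = h₁Generator :=
  zmodHomOfPowEqOne_ofAdd_one _ _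

theorem toZMod_comp_ofZMod : toZMod.comp ofZMod = MonoidHom.id _ :=
  MonoidHom.ext_multiplicative_zmod <| by
    rw [MonoidHom.comp_apply, ofZMod_ofAdd_one, toZMod_h₁Generator, MonoidHom.id_apply]

theorem ofZMod_comp_toZMod : ofZMod.comp toZMod = MonoidHom.id _ := by
  refine Abelianization.hom_ext _ _ <| PresentedGroup.ext fun i => ?_
  change ofZMod (toZMod (toH₁ (.of i))) = toH₁ (.of i)
  rw [toZMod_toH₁, FreeGroup.lift_apply_of]
  fin_cases i
  · calc ofZMod (.ofAdd 7) = ofZMod (.ofAdd 1) ^ 7 := by rw [← map_pow]; rfl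
      _ = toH₁ a := by rw [ofZMod_ofAdd_one, h₁Generator_pow_seven]
  · calc ofZMod (.ofAdd 2) = ofZMod (.ofAdd 1) ^ 2 := by rw [← map_pow]; rfl
      _ = toH₁ b := by rw [ofZMod_ofAdd_one, h₁Generator_sq]

theorem football_homology :
    Nonempty (Abelianization G ≃* Multiplicative (ZMod 14)) :=
  ⟨toZMod.toMulEquiv ofZMod ofZMod_comp_toZMod toZMod_comp_ofZMod⟩

end FootballManifold
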